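/- arXiv:2303.16120 — 4 statements merged into one kernel-verified Lean document; each statement's English description precedes it below -/
import Mathlib

section
/- Let f : ℤ≥0^J → [0,1] be a probability mass function, f^{(m)} its m-fold convolution, and v an index with n_v ≥ 1. Then ∑_{i ≤ n} (i_v / n_v) · f(i) · f^{(m−1)}(n − i) = f^{(m)}(n) / m, where the sum ranges over all i ∈ ℤ≥0^J with i_j ≤ n_j for all j. -/
/-!
Multiplying the `n`-th coefficient of a power series by `n_v` is the Euler derivation
`X_v ∂_v`. If `P` is the generating series of `f`, then `f^{(m)}(n)` is the `n`-th coefficient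
of `P^m`, and the power rule `X_v ∂_v (P^m) = m · (X_v ∂_v P) · P^(m-1)`, read at the
coefficient `n`, says `n_v f^{(m)}(n) = m ∑_{i ≤ n} i_v f(i) f^{(m-1)}(n - i)`.
-/

/-- The convolution power `f^{(m)}`. -/
def conv {J : ℕ} (f : (Fin J → ℕ) → ℝ) : ℕ → (Fin J → ℕ) → ℝ
  | 0 => fun n => if n = 0 then 1 else 0
  | m + 1 => fun n => ∑ i ∈ Finset.Iic n, f i * conv f m (n - i)

open Finset MvPowerSeries

theorem MvPowerSeries.coeff_X_mul_pderiv {σ R : Type*} [CommSemiring R] (i : σ)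
    (φ : MvPowerSeries σ R) (d : σ →₀ ℕ) :
    coeff d (X i * pderiv R i φ) = d i * coeff d φ := by
  rw [X_def, coeff_monomial_mul, one_mul]
  split_ifs with h
  · have hi : 1 ≤ d i := Finsupp.single_le_iff.mp h
    rw [coeff_pderiv, tsub_add_cancel_of_le h, Finsupp.tsub_apply, Finsupp.single_eq_same,
      mul_comm, ← Nat.cast_add_one, Nat.sub_add_cancel hi]
  · have hi : d i = 0 := by simpa [Finsupp.single_le_iff] using h
    rw [hi, Nat.cast_zero, zero_mul]

theorem Finsupp.sum_antidiagonal_equivFunOnFinite_symm {σ M : Type*} [Fintype σ] [DecidableEq σ]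
    [AddCommMonoid M] (n : σ → ℕ) (F : (σ →₀ ℕ) × (σ →₀ ℕ) → M) :
    ∑ p ∈ antidiagonal (equivFunOnFinite.symm n), F p =
      ∑ i ∈ Iic n, F (equivFunOnFinite.symm i, equivFunOnFinite.symm (n - i)) := by
  have split_eq : ∀ p ∈ antidiagonal (equivFunOnFinite.symm n),
      ⇑p.1 ≤ n ∧ (equivFunOnFinite.symm ⇑p.1, equivFunOnFinite.symm (n - ⇑p.1)) = p := by
    rintro ⟨a, b⟩ h
    obtain rfl : n = ⇑(a + b) := congrArg DFunLike.coe (mem_antidiagonal.mp h).symm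
    simp
  refine sum_nbij' (fun p ↦ p.1) (fun i ↦ (equivFunOnFinite.symm i, equivFunOnFinite.symm (n - i)))
    (fun p hp ↦ mem_Iic.mpr (split_eq p hp).1) ?_ (fun p hp ↦ (split_eq p hp).2) (fun i _ ↦ rfl)
    (fun p hp ↦ congrArg F (split_eq p hp).2.symm)
  intro i hi
  rw [mem_Iic] at hi
  rw [HasAntidiagonal.mem_antidiagonal]
  ext x
  simp [add_tsub_cancel_of_le (hi x)]

noncomputable def generatingSeries {σ R : Type*} (f : (σ → ℕ) → R) : MvPowerSeries σ R :=
  fun d ↦ f d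

@[simp]
theorem coeff_generatingSeries {σ R : Type*} [Semiring R] (f : (σ → ℕ) → R) (d : σ →₀ ℕ) :
    coeff d (generatingSeries f) = f d :=
  rfl

theorem conv_eq_coeff_pow {J : ℕ} (f : (Fin J → ℕ) → ℝ) (m : ℕ) (n : Fin J → ℕ) :
    conv f m n = coeff (Finsupp.equivFunOnFinite.symm n) (generatingSeries f ^ m) := by
  induction m generalizing n with
  | zero => simp [conv, coeff_one, Finsupp.ext_iff, funext_iff]
  | succ m ih =>
    rw [pow_succ', coeff_mul, Finsupp.sum_antidiagonal_equivFunOnFinite_symm]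
    simp [conv, ih]

theorem coord_mul_conv_succ {J : ℕ} (f : (Fin J → ℕ) → ℝ) (v : Fin J) (k : ℕ)
    (n : Fin J → ℕ) :
    (n v : ℝ) * conv f (k + 1) n = (k + 1) * ∑ i ∈ Iic n, (i v : ℝ) * f i * conv f k (n - i) := by
  set P := generatingSeries f
  have power_rule :
      X v * pderiv ℝ v (P ^ (k + 1)) = C ((k : ℝ) + 1) * ((X v * pderiv ℝ v P) * P ^ k) := by
    rw [pderiv_pow, map_add, map_one, map_natCast]
    push_cast
    ring
  have h := congrArg (coeff (Finsupp.equivFunOnFinite.symm n)) power_rule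
  rw [coeff_X_mul_pderiv, coeff_C_mul, coeff_mul,
    Finsupp.sum_antidiagonal_equivFunOnFinite_symm] at h
  simpa [coeff_X_mul_pderiv, conv_eq_coeff_pow, P, mul_assoc] using h

theorem panjer_symmetry_identity_general {J : ℕ} (f : (Fin J → ℕ) → ℝ)
    (m : ℕ) (hm : 1 ≤ m) (n : Fin J → ℕ) (v : Fin J) (hv : 1 ≤ n v) :
    ∑ i ∈ Finset.Iic n, ((i v : ℝ) / (n v : ℝ)) * f i * conv f (m - 1) (n - i) =
      conv f m n / m := by
  obtain ⟨k, rfl⟩ := Nat.exists_eq_add_of_le' hm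
  have hnv : (n v : ℝ) ≠ 0 := Nat.cast_ne_zero.mpr (Nat.one_le_iff_ne_zero.mp hv)
  simp_rw [Nat.add_sub_cancel, div_mul_eq_mul_div, ← sum_div]
  rw [div_eq_div_iff hnv (by positivity), mul_comm (conv f _ n), coord_mul_conv_succ]
  push_cast
  ring

/-- Let `f` be a PMF on `ℤ≥0^J`, `f^{(m)}` its `m`-fold convolution, and `v` an index
with `n v ≥ 1`. Then `∑_{i ≤ n} (i_v/n_v) f(i) f^{(m−1)}(n−i) = f^{(m)}(n)/m`. -/
theorem panjer_symmetry_identity {J : ℕ} (f : (Fin J → ℕ) → ℝ)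
    (hfnonneg : ∀ i, 0 ≤ f i) (hfsum : ∑' i, f i = 1)
    (m : ℕ) (hm : 1 ≤ m) (n : Fin J → ℕ) (v : Fin J) (hv : 1 ≤ n v) :
    ∑ i ∈ Finset.Iic n, ((i v : ℝ) / (n v : ℝ)) * f i * conv f (m - 1) (n - i) =
      conv f m n / m :=
  panjer_symmetry_identity_general f m hm n v hv
end

section
/- Let N be a compound Poisson random vector on ℤ≥0^J: N = ∑_{m=1}^{M} Y_m where M ~ Poisson(Λ) and Y_m are i.i.d. with PMF f, independent of M. Then for any n ∈ ℤ≥0^J with n ≠ 0 and any coordinate v with n_v ≥ 1: P(N = n) = Λ · ∑_{i ≤ n} (i_v / n_v) · f(i) · P(N = n − i). -/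
/-- The PMF of a compound Poisson random vector `N = ∑_{m=1}^M Y_m` on `ℤ≥0^J`,
where `M ~ Poisson(Λ)` and the `Y_m` are i.i.d. with PMF `f`, independent of `M`. -/
noncomputable def compoundPoissonPMF {J : ℕ} (Λ : ℝ) (f : (Fin J → ℕ) → ℝ) (n : Fin J → ℕ) : ℝ :=
  ∑' m : ℕ, Real.exp (-Λ) * Λ ^ m / m.factorial * conv f m n

/-!
Write `g ⋆ h` for the convolution `(g ⋆ h) n = ∑_{i ≤ n} g i h (n - i)` and
`D_v g n = n_v g n`. Since `n_v = i_v + (n - i)_v`, `D_v` is a derivation for `⋆`, so induction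
on `m` gives `D_v f^{⋆(m+1)} = (m + 1) (D_v f ⋆ f^{⋆m})`. Multiplying by the Poisson weights
`e^{-Λ} Λ^(m+1) / (m+1)!` and summing over `m` turns the factor `m + 1` into `Λ`, which is the
recursion `D_v P = Λ (D_v f ⋆ P)`. The series converge absolutely because
`|f^{⋆m}(k)| ≤ (∑_{i ≤ k} |f i|)^m`.
-/

open Finset

section Panjer

variable {J : ℕ}

def cauchyProd (g h : (Fin J → ℕ) → ℝ) (n : Fin J → ℕ) : ℝ :=
  ∑ i ∈ Iic n, g i * h (n - i)

def coordMul (v : Fin J) (g : (Fin J → ℕ) → ℝ) (n : Fin J → ℕ) : ℝ :=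
  n v * g n

lemma conv_succ (f : (Fin J → ℕ) → ℝ) (m : ℕ) :
    conv f (m + 1) = cauchyProd f (conv f m) :=
  rfl

lemma cauchyProd_conv_zero (g f : (Fin J → ℕ) → ℝ) : cauchyProd g (conv f 0) = g := by
  funext n
  rw [cauchyProd, sum_eq_single_of_mem n (mem_Iic.2 le_rfl)]
  · simp [conv]
  · intro i hi hin
    have : n - i ≠ 0 := fun h => hin (le_antisymm (mem_Iic.1 hi) (tsub_eq_zero_iff_le.1 h))
    simp [conv, this]

lemma cauchyProd_smul_right (c : ℝ) (g h : (Fin J → ℕ) → ℝ) :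
    cauchyProd g (c • h) = c • cauchyProd g h := by
  funext n
  simp only [cauchyProd, Pi.smul_apply, smul_eq_mul, mul_sum]
  exact sum_congr rfl fun i _ => by ring

lemma cauchyProd_left_comm (g h k : (Fin J → ℕ) → ℝ) :
    cauchyProd g (cauchyProd h k) = cauchyProd h (cauchyProd g k) := by
  funext n
  have hmem : ∀ i j, i ∈ Iic n ∧ j ∈ Iic (n - i) ↔ i ∈ Iic (n - j) ∧ j ∈ Iic n := by
    intro i j
    simp only [mem_Iic, Pi.le_def, Pi.sub_apply]
    constructor <;> rintro ⟨h₁, h₂⟩ <;> refine ⟨fun x => ?_, fun x => ?_⟩ <;>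
      specialize h₁ x <;> specialize h₂ x <;> omega
  simp only [cauchyProd, mul_sum]
  rw [sum_comm' hmem]
  refine sum_congr rfl fun j _ => sum_congr rfl fun i _ => ?_
  rw [tsub_right_comm]
  ring

lemma coordMul_cauchyProd (v : Fin J) (g h : (Fin J → ℕ) → ℝ) :
    coordMul v (cauchyProd g h) =
      cauchyProd (coordMul v g) h + cauchyProd g (coordMul v h) := by
  funext n
  simp only [coordMul, cauchyProd, Pi.add_apply, mul_sum, ← sum_add_distrib]
  refine sum_congr rfl fun i hi => ?_
  have hsplit : (n v : ℝ) = i v + ((n - i) v : ℕ) := by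
    rw [Pi.sub_apply, Nat.cast_sub (mem_Iic.1 hi v)]
    ring
  rw [hsplit]
  ring

lemma coordMul_conv_zero (v : Fin J) (f : (Fin J → ℕ) → ℝ) : coordMul v (conv f 0) = 0 := by
  funext n
  by_cases hn : n = 0 <;> simp [coordMul, conv, hn]

lemma coordMul_conv_succ (v : Fin J) (f : (Fin J → ℕ) → ℝ) (m : ℕ) :
    coordMul v (conv f (m + 1)) = ((m : ℝ) + 1) • cauchyProd (coordMul v f) (conv f m) := by
  induction m with
  | zero => simp [conv_succ, cauchyProd_conv_zero]
  | succ m ih =>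
    rw [conv_succ, coordMul_cauchyProd, ih, cauchyProd_smul_right, cauchyProd_left_comm,
      ← conv_succ]
    push_cast
    module

lemma abs_conv_le (f : (Fin J → ℕ) → ℝ) (m : ℕ) {k n : Fin J → ℕ} (hkn : k ≤ n) :
    |conv f m k| ≤ (∑ i ∈ Iic n, |f i|) ^ m := by
  induction m generalizing k with
  | zero => by_cases hk : k = 0 <;> simp [conv, hk]
  | succ m ih =>
    calc |conv f (m + 1) k| ≤ ∑ i ∈ Iic k, |f i| * |conv f m (k - i)| := by
          rw [conv_succ, cauchyProd]
          simpa only [abs_mul] using abs_sum_le_sum_abs (fun i => f i * conv f m (k - i)) (Iic k)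
      _ ≤ ∑ i ∈ Iic k, |f i| * (∑ i ∈ Iic n, |f i|) ^ m :=
          sum_le_sum fun i _ =>
            mul_le_mul_of_nonneg_left (ih (tsub_le_self.trans hkn)) (abs_nonneg _)
      _ ≤ ∑ i ∈ Iic n, |f i| * (∑ i ∈ Iic n, |f i|) ^ m :=
          sum_le_sum_of_subset_of_nonneg (Iic_subset_Iic.2 hkn) fun _ _ _ => by positivity
      _ = (∑ i ∈ Iic n, |f i|) ^ (m + 1) := by rw [← sum_mul, pow_succ']

noncomputable def poissonWeight (Λ : ℝ) (m : ℕ) : ℝ :=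
  Real.exp (-Λ) * Λ ^ m / m.factorial

lemma poissonWeight_succ_mul (Λ : ℝ) (m : ℕ) :
    poissonWeight Λ (m + 1) * (m + 1) = Λ * poissonWeight Λ m := by
  simp only [poissonWeight, Nat.factorial_succ]
  push_cast
  field_simp
  ring

lemma compoundPoissonPMF_eq_tsum (Λ : ℝ) (f : (Fin J → ℕ) → ℝ) (n : Fin J → ℕ) :
    compoundPoissonPMF Λ f n = ∑' m, poissonWeight Λ m * conv f m n :=
  rfl

lemma summable_poissonWeight_mul_conv (Λ : ℝ) (f : (Fin J → ℕ) → ℝ) (k : Fin J → ℕ) :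
    Summable fun m => poissonWeight Λ m * conv f m k := by
  set B := ∑ i ∈ Iic k, |f i|
  refine ((Real.summable_pow_div_factorial (|Λ| * B)).mul_left (Real.exp (-Λ))).of_norm_bounded
    fun m => ?_
  calc ‖poissonWeight Λ m * conv f m k‖
      = Real.exp (-Λ) * |Λ| ^ m / m.factorial * |conv f m k| := by
        simp [poissonWeight, abs_of_pos (Real.exp_pos _)]
    _ ≤ Real.exp (-Λ) * |Λ| ^ m / m.factorial * B ^ m :=
        mul_le_mul_of_nonneg_left (abs_conv_le f m le_rfl) (by positivity)
    _ = Real.exp (-Λ) * ((|Λ| * B) ^ m / m.factorial) := by ring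

theorem coordMul_compoundPoissonPMF (Λ : ℝ) (f : (Fin J → ℕ) → ℝ) (v : Fin J) :
    coordMul v (compoundPoissonPMF Λ f) =
      Λ • cauchyProd (coordMul v f) (compoundPoissonPMF Λ f) := by
  funext n
  have hs := summable_poissonWeight_mul_conv Λ f
  calc coordMul v (compoundPoissonPMF Λ f) n
      = ∑' m, poissonWeight Λ m * coordMul v (conv f m) n := by
        simp only [coordMul, compoundPoissonPMF_eq_tsum, ← tsum_mul_left, mul_left_comm]
    _ = ∑' m, poissonWeight Λ (m + 1) * coordMul v (conv f (m + 1)) n := by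
        rw [Summable.tsum_eq_zero_add, coordMul_conv_zero, Pi.zero_apply, mul_zero, zero_add]
        simpa only [coordMul, mul_left_comm] using (hs n).mul_left (n v : ℝ)
    _ = ∑' m, Λ * ∑ i ∈ Iic n, coordMul v f i * (poissonWeight Λ m * conv f m (n - i)) := by
        refine tsum_congr fun m => ?_
        rw [coordMul_conv_succ, Pi.smul_apply, smul_eq_mul, ← mul_assoc, poissonWeight_succ_mul,
          cauchyProd, mul_assoc, mul_sum]
        exact congrArg _ (sum_congr rfl fun i _ => by ring)
    _ = (Λ • cauchyProd (coordMul v f) (compoundPoissonPMF Λ f)) n := by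
        rw [tsum_mul_left, Summable.tsum_finsetSum fun i _ => (hs (n - i)).mul_left _]
        simp only [cauchyProd, Pi.smul_apply, smul_eq_mul, tsum_mul_left,
          compoundPoissonPMF_eq_tsum]

end Panjer

theorem compound_poisson_panjer_general {J : ℕ} (Λ : ℝ)
    (f : (Fin J → ℕ) → ℝ)
    (n : Fin J → ℕ) (v : Fin J) (hv : 1 ≤ n v) :
    compoundPoissonPMF Λ f n =
      Λ * ∑ i ∈ Finset.Iic n,
        ((i v : ℝ) / (n v : ℝ)) * f i * compoundPoissonPMF Λ f (n - i) := by
  have hnv : (n v : ℝ) ≠ 0 := by exact_mod_cast (by omega : n v ≠ 0)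
  have key := congrFun (coordMul_compoundPoissonPMF Λ f v) n
  simp only [coordMul, cauchyProd, Pi.smul_apply, smul_eq_mul] at key
  have hdiv : ∑ i ∈ Iic n, ((i v : ℝ) / n v) * f i * compoundPoissonPMF Λ f (n - i)
      = (∑ i ∈ Iic n, (i v : ℝ) * f i * compoundPoissonPMF Λ f (n - i)) / n v := by
    rw [sum_div]
    exact sum_congr rfl fun i _ => by ring
  rw [hdiv, mul_div_assoc', ← key]
  field_simp

/-- Multivariate Panjer recursion for compound Poisson distributions: if `N` is
compound Poisson with rate `Λ` and jump PMF `f`, then for `n ≠ 0` and a coordinate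
`v` with `n v ≥ 1`, `P(N = n) = Λ ∑_{i ≤ n} (i_v/n_v) f(i) P(N = n − i)`. -/
theorem compound_poisson_panjer {J : ℕ} (Λ : ℝ) (hΛ : 0 < Λ)
    (f : (Fin J → ℕ) → ℝ) (hfnonneg : ∀ i, 0 ≤ f i) (hfsum : ∑' i, f i = 1)
    (n : Fin J → ℕ) (hn : n ≠ 0) (v : Fin J) (hv : 1 ≤ n v) :
    compoundPoissonPMF Λ f n =
      Λ * ∑ i ∈ Finset.Iic n,
        ((i v : ℝ) / (n v : ℝ)) * f i * compoundPoissonPMF Λ f (n - i) :=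
  compound_poisson_panjer_general Λ f n v hv
end

section
/- Suppose S is a ℤ≥0-valued random variable with E[log(S+1)] < ∞, and let δ > 0, t₀ ≥ 0. Then ∫_{t₀}^∞ [1 − E((1 − e^{−δτ})^S)] dτ < ∞. -/
open MeasureTheory
open scoped ENNReal

lemma lintegral_exp_decay_Ioi (δ a : ℝ) (hδ : 0 < δ) :
    ∫⁻ τ in Set.Ioi a, ENNReal.ofReal (Real.exp (-δ * τ)) =
      ENNReal.ofReal (Real.exp (-δ * a) / δ) := by
  have hint : IntegrableOn (fun x => Real.exp (-δ * x)) (Set.Ioi a) :=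
    exp_neg_integrableOn_Ioi a hδ
  rw [← ofReal_integral_eq_lintegral_ofReal hint
    (Filter.Eventually.of_forall fun x => (Real.exp_pos _).le)]
  congr 1
  have h := integral_comp_mul_left_Ioi (fun x => Real.exp (-x)) a hδ
  simp only [smul_eq_mul] at h
  calc ∫ x in Set.Ioi a, Real.exp (-δ * x)
      = ∫ x in Set.Ioi a, Real.exp (-(δ * x)) := by simp [neg_mul]
    _ = δ⁻¹ * Real.exp (-(δ * a)) := by rw [h, integral_exp_neg_Ioi]
    _ = Real.exp (-δ * a) / δ := by rw [neg_mul]; ring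

/-- Suppose `S` is a `ℤ≥0`-valued random variable (with PMF `p`) with
`E[log(S+1)] < ∞`, and let `δ > 0`, `t₀ ≥ 0`.  Then
`∫_{t₀}^∞ [1 − E((1 − e^{−δτ})^S)] dτ < ∞`, stated via the Lebesgue integral of the
nonnegative integrand. -/
theorem integral_one_sub_pgf_lt_top (p : ℕ → ℝ) (hpnonneg : ∀ n, 0 ≤ p n)
    (hpsum : ∑' n, p n = 1)
    (hlog : Summable (fun n : ℕ => p n * Real.log (n + 1)))
    (δ t₀ : ℝ) (hδ : 0 < δ) (ht₀ : 0 ≤ t₀) :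
    ∫⁻ τ in Set.Ioi t₀,
        ENNReal.ofReal (1 - ∑' n : ℕ, p n * (1 - Real.exp (-δ * τ)) ^ n) < ⊤ := by
  have hp : Summable p := by
    by_contra h
    rw [tsum_eq_zero_of_not_summable h] at hpsum
    norm_num at hpsum
  -- the dominating functions
  set F : ℕ → ℝ → ℝ≥0∞ := fun n τ =>
    ENNReal.ofReal (p n * min 1 (n * Real.exp (-δ * τ))) with hF
  -- pointwise bound
  have hbound : ∀ τ ∈ Set.Ioi t₀,
      ENNReal.ofReal (1 - ∑' n : ℕ, p n * (1 - Real.exp (-δ * τ)) ^ n)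
        ≤ ∑' n, F n τ := by
    intro τ hτ
    have hτ0 : 0 ≤ τ := le_trans ht₀ (le_of_lt hτ)
    set x := Real.exp (-δ * τ) with hx
    have hx0 : 0 < x := Real.exp_pos _
    have hx1 : x ≤ 1 := by
      rw [hx]
      apply Real.exp_le_one_iff.mpr
      nlinarith
    have h1x0 : 0 ≤ 1 - x := by linarith
    have h1x1 : 1 - x ≤ 1 := by linarith
    have hterm : ∀ n : ℕ, 1 - (1 - x) ^ n ≤ min 1 ((n : ℝ) * x) := by
      intro n
      refine le_min ?_ ?_
      · have := pow_nonneg h1x0 n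
        linarith
      · have hb : (1 : ℝ) + n * (-x) ≤ (1 + (-x)) ^ n :=
          one_add_mul_le_pow (by linarith) n
        have : (1 : ℝ) - n * x ≤ (1 - x) ^ n := by
          simpa [sub_eq_add_neg, mul_neg] using hb
        linarith
    have hterm_nonneg : ∀ n : ℕ, 0 ≤ 1 - (1 - x) ^ n := fun n => by
      have h := pow_le_one₀ h1x0 h1x1 (n := n)
      linarith
    have hsum_pow : Summable (fun n : ℕ => p n * (1 - x) ^ n) := by
      apply hp.of_nonneg_of_le
        (fun n => mul_nonneg (hpnonneg n) (pow_nonneg h1x0 n))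
      intro n
      calc p n * (1 - x) ^ n ≤ p n * 1 :=
            mul_le_mul_of_nonneg_left (pow_le_one₀ h1x0 h1x1) (hpnonneg n)
        _ = p n := mul_one _
    have hsum_min : Summable (fun n : ℕ => p n * min 1 ((n : ℝ) * x)) := by
      apply hp.of_nonneg_of_le
        (fun n => mul_nonneg (hpnonneg n)
          (le_min zero_le_one (mul_nonneg (Nat.cast_nonneg n) hx0.le)))
      intro n
      calc p n * min 1 ((n : ℝ) * x) ≤ p n * 1 :=
            mul_le_mul_of_nonneg_left (min_le_left _ _) (hpnonneg n)
        _ = p n := mul_one _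
    have heq : 1 - ∑' n : ℕ, p n * (1 - x) ^ n
        = ∑' n : ℕ, p n * (1 - (1 - x) ^ n) := by
      have h2 : (∑' n : ℕ, p n * (1 - (1 - x) ^ n))
          = ∑' n : ℕ, (p n - p n * (1 - x) ^ n) := tsum_congr fun n => by ring
      rw [h2, Summable.tsum_sub hp hsum_pow, hpsum]
    rw [heq]
    have hle : (∑' n : ℕ, p n * (1 - (1 - x) ^ n))
        ≤ ∑' n : ℕ, p n * min 1 ((n : ℝ) * x) := by
      apply Summable.tsum_le_tsum _ _ hsum_min
      · intro n
        exact mul_le_mul_of_nonneg_left (hterm n) (hpnonneg n)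
      · apply hp.of_nonneg_of_le
          (fun n => mul_nonneg (hpnonneg n) (hterm_nonneg n))
        intro n
        calc p n * (1 - (1 - x) ^ n) ≤ p n * 1 := by
              have := pow_nonneg h1x0 n
              apply mul_le_mul_of_nonneg_left _ (hpnonneg n)
              linarith
          _ = p n := mul_one _
    calc ENNReal.ofReal (∑' n : ℕ, p n * (1 - (1 - x) ^ n))
        ≤ ENNReal.ofReal (∑' n : ℕ, p n * min 1 ((n : ℝ) * x)) :=
          ENNReal.ofReal_le_ofReal hle
      _ = ∑' n, F n τ := by
          rw [ENNReal.ofReal_tsum_of_nonneg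
            (fun n => mul_nonneg (hpnonneg n)
              (le_min zero_le_one (mul_nonneg (Nat.cast_nonneg n) hx0.le)))
            hsum_min]
  -- measurability of F n
  have hFmeas : ∀ n : ℕ, Measurable (F n) := by
    intro n
    fun_prop
  -- bound the integral of each F n
  have hFint : ∀ n : ℕ, ∫⁻ τ in Set.Ioi t₀, F n τ
      ≤ ENNReal.ofReal (p n * (Real.log (n + 1) / δ + 1 / δ)) := by
    intro n
    have hlogn : 0 ≤ Real.log ((n : ℝ) + 1) :=
      Real.log_nonneg (le_add_of_nonneg_left (Nat.cast_nonneg n))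
    set T : ℝ := t₀ + Real.log ((n : ℝ) + 1) / δ with hT
    have hTt₀ : t₀ ≤ T := by
      rw [hT]
      have : 0 ≤ Real.log ((n : ℝ) + 1) / δ := div_nonneg hlogn hδ.le
      linarith
    have hsplit : Set.Ioi t₀ = Set.Ioc t₀ T ∪ Set.Ioi T :=
      (Set.Ioc_union_Ioi_eq_Ioi hTt₀).symm
    have hFsplit : ∀ τ, F n τ = ENNReal.ofReal (p n) *
        ENNReal.ofReal (min 1 ((n : ℝ) * Real.exp (-δ * τ))) := by
      intro τ
      rw [hF, ← ENNReal.ofReal_mul (hpnonneg n)]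
    calc ∫⁻ τ in Set.Ioi t₀, F n τ
        = ENNReal.ofReal (p n) *
          ∫⁻ τ in Set.Ioi t₀,
            ENNReal.ofReal (min 1 ((n : ℝ) * Real.exp (-δ * τ))) := by
          simp_rw [hFsplit]
          rw [lintegral_const_mul]
          fun_prop
      _ ≤ ENNReal.ofReal (p n) *
            (ENNReal.ofReal (Real.log ((n : ℝ) + 1) / δ) + ENNReal.ofReal (1 / δ)) := by
          apply mul_le_mul_right
          rw [hsplit, lintegral_union measurableSet_Ioi (Set.Ioc_disjoint_Ioi le_rfl)]
          apply add_le_add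
          · -- on Ioc: bound by 1
            calc ∫⁻ τ in Set.Ioc t₀ T,
                  ENNReal.ofReal (min 1 ((n : ℝ) * Real.exp (-δ * τ)))
                ≤ ∫⁻ _ in Set.Ioc t₀ T, 1 := by
                  apply lintegral_mono
                  intro τ
                  calc ENNReal.ofReal (min 1 ((n : ℝ) * Real.exp (-δ * τ)))
                      ≤ ENNReal.ofReal 1 :=
                        ENNReal.ofReal_le_ofReal (min_le_left _ _)
                    _ = 1 := ENNReal.ofReal_one
              _ = volume (Set.Ioc t₀ T) := by rw [setLIntegral_one]
              _ = ENNReal.ofReal (Real.log ((n : ℝ) + 1) / δ) := by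
                  rw [Real.volume_Ioc, hT]
                  congr 1
                  ring
          · -- on Ioi T: bound by n * exp
            calc ∫⁻ τ in Set.Ioi T,
                  ENNReal.ofReal (min 1 ((n : ℝ) * Real.exp (-δ * τ)))
                ≤ ∫⁻ τ in Set.Ioi T,
                    ENNReal.ofReal ((n : ℝ)) * ENNReal.ofReal (Real.exp (-δ * τ)) := by
                  apply lintegral_mono
                  intro τ
                  dsimp only
                  rw [← ENNReal.ofReal_mul (Nat.cast_nonneg n)]
                  exact ENNReal.ofReal_le_ofReal (min_le_right _ _)
              _ = ENNReal.ofReal ((n : ℝ)) *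
                    ENNReal.ofReal (Real.exp (-δ * T) / δ) := by
                  rw [lintegral_const_mul _ (by fun_prop),
                    lintegral_exp_decay_Ioi δ T hδ]
              _ ≤ ENNReal.ofReal (1 / δ) := by
                  rw [← ENNReal.ofReal_mul (Nat.cast_nonneg n)]
                  apply ENNReal.ofReal_le_ofReal
                  have hexpT : Real.exp (-δ * T) ≤ ((n : ℝ) + 1)⁻¹ := by
                    rw [hT]
                    have : -δ * (t₀ + Real.log ((n : ℝ) + 1) / δ)
                        = -δ * t₀ + -(Real.log ((n : ℝ) + 1)) := by
                      field_simp
                      ring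
                    rw [this, Real.exp_add, Real.exp_neg,
                      Real.exp_log (by positivity)]
                    have h1 : Real.exp (-δ * t₀) ≤ 1 :=
                      Real.exp_le_one_iff.mpr (by nlinarith)
                    have h2 : (0:ℝ) < ((n : ℝ) + 1)⁻¹ := by positivity
                    nlinarith
                  have hn1 : (n : ℝ) * ((n : ℝ) + 1)⁻¹ ≤ 1 := by
                    rw [← div_eq_mul_inv, div_le_one (by positivity)]
                    linarith
                  calc (n : ℝ) * (Real.exp (-δ * T) / δ)
                      ≤ (n : ℝ) * (((n : ℝ) + 1)⁻¹ / δ) := by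
                        apply mul_le_mul_of_nonneg_left _ (Nat.cast_nonneg n)
                        exact div_le_div_of_nonneg_right hexpT hδ.le
                    _ ≤ 1 / δ := by
                        rw [mul_div_assoc'] at *
                        apply div_le_div_of_nonneg_right hn1 hδ.le
      _ = ENNReal.ofReal (p n * (Real.log (n + 1) / δ + 1 / δ)) := by
          rw [← ENNReal.ofReal_add (div_nonneg hlogn hδ.le)
            (div_nonneg zero_le_one hδ.le),
            ← ENNReal.ofReal_mul (hpnonneg n)]
  -- put it together
  calc ∫⁻ τ in Set.Ioi t₀,
        ENNReal.ofReal (1 - ∑' n : ℕ, p n * (1 - Real.exp (-δ * τ)) ^ n)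
      ≤ ∫⁻ τ in Set.Ioi t₀, ∑' n, F n τ := by
        apply setLIntegral_mono' measurableSet_Ioi hbound
    _ = ∑' n, ∫⁻ τ in Set.Ioi t₀, F n τ :=
        lintegral_tsum (fun n => (hFmeas n).aemeasurable)
    _ ≤ ∑' n, ENNReal.ofReal (p n * (Real.log (n + 1) / δ + 1 / δ)) :=
        ENNReal.tsum_le_tsum hFint
    _ = ENNReal.ofReal (∑' n, p n * (Real.log (n + 1) / δ + 1 / δ)) := by
        rw [ENNReal.ofReal_tsum_of_nonneg]
        · intro n
          exact mul_nonneg (hpnonneg n)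
            (add_nonneg (div_nonneg (Real.log_nonneg (le_add_of_nonneg_left (Nat.cast_nonneg n))) hδ.le)
              (div_nonneg zero_le_one hδ.le))
        · have h1 : Summable (fun n : ℕ => p n * Real.log (n + 1) / δ) :=
            hlog.div_const δ
          have h2 : Summable (fun n : ℕ => p n * (1 / δ)) := hp.mul_right _
          have := h1.add h2
          apply this.congr
          intro n
          ring
    _ < ⊤ := ENNReal.ofReal_lt_top
end

section
/- Suppose S is a ℤ≥0-valued random variable and η > 0 with ∑_{n=1}^∞ P(S=n) H_n/η = ∞ (equivalently E[log(S+1)] = ∞). Then ∫_0^∞ [1 − E((1 − e^{−ητ})^S)] dτ = ∞. -/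
/-!
Writing `x = 1 - e^{-ητ}`, the integrand is `∑ₙ pₙ (1 - xⁿ)` and `1 - xⁿ = e^{-ητ} ∑_{k<n} xᵏ`.
Since `e^{-ητ} xᵏ` is the derivative of `x^{k+1} / (η (k+1))`, its integral over `(0, ∞)` is
`1 / (η (k+1))`, so by Tonelli the integral is exactly `∑ₙ pₙ Hₙ / η`, which diverges.
-/

open MeasureTheory Set Filter Topology

theorem ENNReal.tsum_ofReal_eq_top {α : Type*} {f : α → ℝ} (hf : ∀ a, 0 ≤ f a)
    (h : ¬ Summable f) : ∑' a, ENNReal.ofReal (f a) = ⊤ := by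
  refine ENNReal.tsum_coe_eq_top_iff_not_summable_coe.2 ?_
  simpa only [Real.coe_toNNReal _ (hf _)] using h

theorem ofReal_one_sub_tsum_mul_pow {p : ℕ → ℝ} (hp0 : ∀ n, 0 ≤ p n) (hp : HasSum p 1)
    {x : ℝ} (hx0 : 0 ≤ x) (hx1 : x ≤ 1) :
    ENNReal.ofReal (1 - ∑' n, p n * x ^ n) = ∑' n, ENNReal.ofReal (p n * (1 - x ^ n)) := by
  have hpow : ∀ n, x ^ n ≤ 1 := fun n => pow_le_one₀ hx0 hx1
  have hpx : Summable fun n => p n * x ^ n :=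
    hp.summable.of_nonneg_of_le (fun n => mul_nonneg (hp0 n) (pow_nonneg hx0 n))
      fun n => mul_le_of_le_one_right (hp0 n) (hpow n)
  have hsum : HasSum (fun n => p n * (1 - x ^ n)) (1 - ∑' n, p n * x ^ n) := by
    simpa only [mul_one_sub] using hp.sub hpx.hasSum
  rw [← hsum.tsum_eq, ENNReal.ofReal_tsum_of_nonneg
    (fun n => mul_nonneg (hp0 n) (sub_nonneg.2 (hpow n))) hsum.summable]

theorem lintegral_Ioi_deriv_of_nonneg {g g' : ℝ → ℝ} {a l : ℝ}
    (hderiv : ∀ x ∈ Ici a, HasDerivAt g (g' x) x) (g'pos : ∀ x ∈ Ioi a, 0 ≤ g' x)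
    (hg : Tendsto g atTop (𝓝 l)) :
    ∫⁻ x in Ioi a, ENNReal.ofReal (g' x) = ENNReal.ofReal (l - g a) := by
  rw [← integral_Ioi_of_hasDerivAt_of_nonneg' hderiv g'pos hg,
    ofReal_integral_eq_lintegral_ofReal (integrableOn_Ioi_deriv_of_nonneg' hderiv g'pos hg)
      ((ae_restrict_iff' measurableSet_Ioi).2 (.of_forall g'pos))]

section ExpDecay

variable {η : ℝ}

theorem one_sub_exp_neg_mul_nonneg (hη : 0 ≤ η) {τ : ℝ} (hτ : 0 ≤ τ) :
    0 ≤ 1 - Real.exp (-η * τ) :=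
  sub_nonneg.2 (Real.exp_le_one_iff.2 (mul_nonpos_of_nonpos_of_nonneg (neg_nonpos.2 hη) hτ))

theorem lintegral_Ioi_exp_mul_one_sub_exp_pow (hη : 0 < η) (k : ℕ) :
    ∫⁻ τ in Ioi 0, ENNReal.ofReal (Real.exp (-η * τ) * (1 - Real.exp (-η * τ)) ^ k)
      = ENNReal.ofReal (1 / (η * (k + 1))) := by
  have hderiv : ∀ τ ∈ Ici (0 : ℝ), HasDerivAt
      (fun τ => (1 - Real.exp (-η * τ)) ^ (k + 1) / (η * (k + 1)))
      (Real.exp (-η * τ) * (1 - Real.exp (-η * τ)) ^ k) τ := by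
    intro τ _
    refine ((((hasDerivAt_id' τ).const_mul (-η)).exp.const_sub 1).pow (k + 1)).div_const
      (η * (k + 1)) |>.congr_deriv ?_
    push_cast
    field_simp
  have hlim : Tendsto (fun τ => (1 - Real.exp (-η * τ)) ^ (k + 1) / (η * (k + 1))) atTop
      (𝓝 (1 / (η * (k + 1)))) := by
    have hexp : Tendsto (fun τ => Real.exp (-η * τ)) atTop (𝓝 0) :=
      Real.tendsto_exp_atBot.comp (tendsto_id.const_mul_atTop_of_neg (neg_neg_of_pos hη))
    simpa using ((hexp.const_sub 1).pow (k + 1)).div_const (η * (k + 1))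
  have hnonneg : ∀ τ ∈ Ioi (0 : ℝ), 0 ≤ Real.exp (-η * τ) * (1 - Real.exp (-η * τ)) ^ k :=
    fun τ hτ => mul_nonneg (Real.exp_pos _).le
      (pow_nonneg (one_sub_exp_neg_mul_nonneg hη.le (le_of_lt hτ)) k)
  rw [lintegral_Ioi_deriv_of_nonneg hderiv hnonneg hlim]
  simp

theorem lintegral_Ioi_one_sub_one_sub_exp_pow (hη : 0 < η) (n : ℕ) :
    ∫⁻ τ in Ioi 0, ENNReal.ofReal (1 - (1 - Real.exp (-η * τ)) ^ n)
      = ENNReal.ofReal ((∑ k ∈ Finset.Icc 1 n, (1 : ℝ) / k) / η) := by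
  have hgeom : ∀ τ : ℝ, 1 - (1 - Real.exp (-η * τ)) ^ n
      = ∑ k ∈ Finset.range n, Real.exp (-η * τ) * (1 - Real.exp (-η * τ)) ^ k := fun τ => by
    simpa only [sub_sub_cancel, Finset.mul_sum] using
      (mul_neg_geom_sum (1 - Real.exp (-η * τ)) n).symm
  have hharm : (∑ k ∈ Finset.Icc 1 n, (1 : ℝ) / k) / η
      = ∑ k ∈ Finset.range n, 1 / (η * (k + 1)) := by
    rw [Finset.sum_div, ← Finset.Ico_add_one_right_eq_Icc, Finset.sum_Ico_eq_sum_range]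
    refine Finset.sum_congr (by simp) fun k _ => ?_
    push_cast
    field_simp
    ring
  calc ∫⁻ τ in Ioi 0, ENNReal.ofReal (1 - (1 - Real.exp (-η * τ)) ^ n)
      = ∫⁻ τ in Ioi 0, ∑ k ∈ Finset.range n,
          ENNReal.ofReal (Real.exp (-η * τ) * (1 - Real.exp (-η * τ)) ^ k) := by
        refine setLIntegral_congr_fun measurableSet_Ioi fun τ hτ => ?_
        rw [hgeom, ENNReal.ofReal_sum_of_nonneg fun k _ => mul_nonneg (Real.exp_pos _).le
          (pow_nonneg (one_sub_exp_neg_mul_nonneg hη.le (le_of_lt hτ)) k)]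
    _ = ∑ k ∈ Finset.range n, ENNReal.ofReal (1 / (η * (k + 1))) := by
        rw [lintegral_finsetSum _ fun k _ => by fun_prop]
        exact Finset.sum_congr rfl fun k _ => lintegral_Ioi_exp_mul_one_sub_exp_pow hη k
    _ = ENNReal.ofReal ((∑ k ∈ Finset.Icc 1 n, (1 : ℝ) / k) / η) := by
        rw [hharm, ENNReal.ofReal_sum_of_nonneg fun k _ => by positivity]

theorem lintegral_one_sub_pgf_eq_tsum {p : ℕ → ℝ} (hp0 : ∀ n, 0 ≤ p n) (hp : HasSum p 1)
    (hη : 0 < η) :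
    ∫⁻ τ in Ioi 0, ENNReal.ofReal (1 - ∑' n, p n * (1 - Real.exp (-η * τ)) ^ n)
      = ∑' n, ENNReal.ofReal (p n * (∑ k ∈ Finset.Icc 1 n, (1 : ℝ) / k) / η) := by
  calc ∫⁻ τ in Ioi 0, ENNReal.ofReal (1 - ∑' n, p n * (1 - Real.exp (-η * τ)) ^ n)
      = ∫⁻ τ in Ioi 0, ∑' n, ENNReal.ofReal (p n * (1 - (1 - Real.exp (-η * τ)) ^ n)) :=
        setLIntegral_congr_fun measurableSet_Ioi fun τ hτ =>
          ofReal_one_sub_tsum_mul_pow hp0 hp (one_sub_exp_neg_mul_nonneg hη.le (le_of_lt hτ))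
            (sub_le_self _ (Real.exp_pos _).le)
    _ = ∑' n, ENNReal.ofReal (p n) *
          ∫⁻ τ in Ioi 0, ENNReal.ofReal (1 - (1 - Real.exp (-η * τ)) ^ n) := by
        rw [lintegral_tsum fun n => by fun_prop]
        refine tsum_congr fun n => ?_
        simp_rw [ENNReal.ofReal_mul (hp0 n)]
        exact lintegral_const_mul _ (by fun_prop)
    _ = ∑' n, ENNReal.ofReal (p n * (∑ k ∈ Finset.Icc 1 n, (1 : ℝ) / k) / η) := by
        simp_rw [lintegral_Ioi_one_sub_one_sub_exp_pow hη, ← ENNReal.ofReal_mul (hp0 _),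
          mul_div_assoc]

end ExpDecay

/-- Suppose `S` is a `ℤ≥0`-valued random variable (with PMF `p`) and `η > 0` with
`∑_{n=1}^∞ P(S=n) H_n / η = ∞` (equivalently `E[log(S+1)] = ∞`), where
`H_n = ∑_{k=1}^n 1/k`.  Then `∫_0^∞ [1 − E((1 − e^{−ητ})^S)] dτ = ∞`. -/
theorem integral_one_sub_pgf_eq_top (p : ℕ → ℝ) (hpnonneg : ∀ n, 0 ≤ p n)
    (hpsum : ∑' n, p n = 1) (η : ℝ) (hη : 0 < η)
    (hdiv : ¬ Summable (fun n : ℕ => p n * (∑ k ∈ Finset.Icc 1 n, (1 : ℝ) / k) / η)) :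
    ∫⁻ τ in Set.Ioi (0 : ℝ),
        ENNReal.ofReal (1 - ∑' n : ℕ, p n * (1 - Real.exp (-η * τ)) ^ n) = ⊤ := by
  have hp : HasSum p 1 := by
    refine hpsum ▸ (Summable.hasSum ?_)
    by_contra h
    simp [tsum_eq_zero_of_not_summable h] at hpsum
  rw [lintegral_one_sub_pgf_eq_tsum hpnonneg hp hη]
  exact ENNReal.tsum_ofReal_eq_top (fun n => div_nonneg (mul_nonneg (hpnonneg n)
    (Finset.sum_nonneg fun k _ => by positivity)) hη.le) hdiv
end
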